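/- Assume a ≠ 0 and let U ⊆ {y ≠ 0} ⊂ ℝ⁴ be the open set where K_KK − 12aμx − 18μp_y²/y² − 9μ²/y⁴ > 0, and on U set Δ = √(K_KK − 12aμx − 18μp_y²/y² − 9μ²/y⁴), u₁ = −2a·x − 3p_y²/y² + Δ/y², u₂ = −2a·x − 3p_y²/y² − Δ/y², and v_i = −p_x/(4a) − (p_y/(4a²y))·(u_i − 4a·x − 3ω) for i = 1,2. Then the canonical Poisson bracket relations {u₁,u₂}₀ = 0, {v₁,v₂}₀ = 0, {u_i,v_j}₀ = δ_{ij} (i,j = 1,2) hold at every point of U; that is, (v₁,u₁,v₂,u₂) are canonical separated variables for the Kaup–Kupershmidt system. -/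

import Mathlib

/-- Canonical Poisson bracket on ℝ⁴ with coordinates `(p_x, p_y, x, y)`. -/
noncomputable def pbracket (f g : ℝ → ℝ → ℝ → ℝ → ℝ) (px py x y : ℝ) : ℝ :=
    (deriv (fun t => f px py t y) x) * (deriv (fun t => g t py x y) px)
  - (deriv (fun t => f t py x y) px) * (deriv (fun t => g px py t y) x)
  + (deriv (fun t => f px py x t) y) * (deriv (fun t => g px t x y) py)
  - (deriv (fun t => f px t x y) py) * (deriv (fun t => g px py x t) y)

/-- The Kaup–Kupershmidt quartic integral. -/
noncomputable def KKK (a ω μ : ℝ) (px py x y : ℝ) : ℝ :=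
  9*(ω*y^2 + py^2 + μ/y^2)^2 + 12*a*py*y^2*(3*x*py - y*px)
    - 2*a^2*y^4*(6*x^2 + y^2) + 12*a*x*(μ - ω*y^4) - 18*ω*μ

/-- The radicand `K_KK − 12aμx − 18μp_y²/y² − 9μ²/y⁴`. -/
noncomputable def radKK (a ω μ : ℝ) (px py x y : ℝ) : ℝ :=
  KKK a ω μ px py x y - 12*a*μ*x - 18*μ*py^2/y^2 - 9*μ^2/y^4

/-- The separating coordinate `u₁ = −2ax − 3p_y²/y² + Δ/y²`, `Δ = √(radKK)`. -/
noncomputable def u1KK (a ω μ : ℝ) (px py x y : ℝ) : ℝ :=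
  -2*a*x - 3*py^2/y^2 + Real.sqrt (radKK a ω μ px py x y) / y^2

/-- The separating coordinate `u₂ = −2ax − 3p_y²/y² − Δ/y²`. -/
noncomputable def u2KK (a ω μ : ℝ) (px py x y : ℝ) : ℝ :=
  -2*a*x - 3*py^2/y^2 - Real.sqrt (radKK a ω μ px py x y) / y^2

/-- The conjugate momentum `v₁ = −p_x/(4a) − (p_y/(4a²y))(u₁ − 4ax − 3ω)`. -/
noncomputable def v1KK (a ω μ : ℝ) (px py x y : ℝ) : ℝ :=
  -px/(4*a) - (py/(4*a^2*y)) * (u1KK a ω μ px py x y - 4*a*x - 3*ω)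

/-- The conjugate momentum `v₂ = −p_x/(4a) − (p_y/(4a²y))(u₂ − 4ax − 3ω)`. -/
noncomputable def v2KK (a ω μ : ℝ) (px py x y : ℝ) : ℝ :=
  -px/(4*a) - (py/(4*a^2*y)) * (u2KK a ω μ px py x y - 4*a*x - 3*ω)


/-!
On `y ≠ 0` the parameter `μ` cancels from the radicand, so `Δ = √R` for a polynomial `R`, and
`u₁, u₂, v₁, v₂` are the members `σ = ±1` of the families
`u_σ = -2ax - 3p_y²/y² + σΔ/y²`, `v_σ = -p_x/(4a) - (p_y/(4a²y))(u_σ - 4ax - 3ω)`.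
For all real `σ, τ` one has `{u_σ, u_τ}₀ = 0`, `{v_σ, v_τ}₀ = 0` and `{u_σ, v_τ}₀ = (1 + στ)/2`.
Since `∂Δ = ∂R/(2Δ)`, each bracket has the form `α/Δ + β + γΔ + δΔ²` with `α, β, γ, δ` free of
`Δ`, and the identity follows by reducing modulo `Δ² = R`, i.e. subtracting `(γ/Δ + δ)(Δ² - R)`.
-/

open Filter Topology

structure HasPartials (f : ℝ → ℝ → ℝ → ℝ → ℝ) (fpx fpy fx fy px py x y : ℝ) : Prop where
  along_px : HasDerivAt (fun t => f t py x y) fpx px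
  along_py : HasDerivAt (fun t => f px t x y) fpy py
  along_x : HasDerivAt (fun t => f px py t y) fx x
  along_y : HasDerivAt (fun t => f px py x t) fy y

section PoissonBracket

variable {f g : ℝ → ℝ → ℝ → ℝ → ℝ} {px py x y : ℝ}

theorem pbracket_eq_of_hasPartials {fpx fpy fx fy gpx gpy gx gy : ℝ}
    (hf : HasPartials f fpx fpy fx fy px py x y) (hg : HasPartials g gpx gpy gx gy px py x y) :
    pbracket f g px py x y = fx * gpx - fpx * gx + fy * gpy - fpy * gy := by
  rw [pbracket, hf.along_px.deriv, hf.along_py.deriv, hf.along_x.deriv, hf.along_y.deriv,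
    hg.along_px.deriv, hg.along_py.deriv, hg.along_x.deriv, hg.along_y.deriv]

theorem pbracket_congr {f' g' : ℝ → ℝ → ℝ → ℝ → ℝ}
    (hf : ∀ {px py x y}, y ≠ 0 → f px py x y = f' px py x y)
    (hg : ∀ {px py x y}, y ≠ 0 → g px py x y = g' px py x y) (hy : y ≠ 0) :
    pbracket f g px py x y = pbracket f' g' px py x y := by
  have hf₀ : ∀ p q s, f p q s y = f' p q s y := fun _ _ _ => hf hy
  have hg₀ : ∀ p q s, g p q s y = g' p q s y := fun _ _ _ => hg hy
  have hfy : (fun t => f px py x t) =ᶠ[𝓝 y] fun t => f' px py x t :=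
    (eventually_ne_nhds hy).mono fun _ => hf
  have hgy : (fun t => g px py x t) =ᶠ[𝓝 y] fun t => g' px py x t :=
    (eventually_ne_nhds hy).mono fun _ => hg
  simp only [pbracket, hf₀, hg₀, hfy.deriv_eq, hgy.deriv_eq]

theorem HasPartials.sqrt {fpx fpy fx fy : ℝ} (hf : HasPartials f fpx fpy fx fy px py x y)
    (h0 : f px py x y ≠ 0) :
    HasPartials (fun p q s t => √(f p q s t)) (fpx / (2 * √(f px py x y)))
      (fpy / (2 * √(f px py x y))) (fx / (2 * √(f px py x y))) (fy / (2 * √(f px py x y)))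
      px py x y :=
  ⟨hf.along_px.sqrt h0, hf.along_py.sqrt h0, hf.along_x.sqrt h0, hf.along_y.sqrt h0⟩

end PoissonBracket

noncomputable def radPolyKK (a ω px py x y : ℝ) : ℝ :=
  9*(ω*y^2 + py^2)^2 + 12*a*py*y^2*(3*x*py - y*px) - 2*a^2*y^4*(6*x^2 + y^2) - 12*a*ω*x*y^4

noncomputable def deltaKK (a ω px py x y : ℝ) : ℝ := √(radPolyKK a ω px py x y)

noncomputable def uKK (a ω σ px py x y : ℝ) : ℝ :=
  -2*a*x - 3*py^2/y^2 + σ * deltaKK a ω px py x y / y^2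

noncomputable def vKK (a ω σ px py x y : ℝ) : ℝ :=
  -px/(4*a) - py/(4*a^2*y) * (uKK a ω σ px py x y - 4*a*x - 3*ω)

section KaupKupershmidt

variable {a ω μ px py x y : ℝ}

theorem radKK_eq_radPolyKK (hy : y ≠ 0) : radKK a ω μ px py x y = radPolyKK a ω px py x y := by
  unfold radKK KKK radPolyKK
  field_simp
  ring

theorem hasPartials_radPolyKK :
    HasPartials (radPolyKK a ω)
      (-12*a*py*y^3)
      (36*py*(ω*y^2 + py^2) + 72*a*x*py*y^2 - 12*a*px*y^3)
      (36*a*py^2*y^2 - 24*a^2*x*y^4 - 12*a*ω*y^4)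
      (36*ω*y*(ω*y^2 + py^2) + 72*a*x*py^2*y - 36*a*px*py*y^2 - 48*a^2*x^2*y^3
        - 12*a^2*y^5 - 48*a*ω*x*y^3)
      px py x y := by
  unfold radPolyKK
  constructor <;>
    exact (DifferentiableAt.hasDerivAt (by fun_prop)).congr_deriv
      (by simp (disch := fun_prop); ring)

theorem hasPartials_deltaKK (hR : 0 < radPolyKK a ω px py x y) :
    HasPartials (deltaKK a ω)
      (-12*a*py*y^3 / (2 * deltaKK a ω px py x y))
      ((36*py*(ω*y^2 + py^2) + 72*a*x*py*y^2 - 12*a*px*y^3) / (2 * deltaKK a ω px py x y))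
      ((36*a*py^2*y^2 - 24*a^2*x*y^4 - 12*a*ω*y^4) / (2 * deltaKK a ω px py x y))
      ((36*ω*y*(ω*y^2 + py^2) + 72*a*x*py^2*y - 36*a*px*py*y^2 - 48*a^2*x^2*y^3
        - 12*a^2*y^5 - 48*a*ω*x*y^3) / (2 * deltaKK a ω px py x y))
      px py x y :=
  hasPartials_radPolyKK.sqrt hR.ne'

theorem hasPartials_uKK {σ dpx dpy dx dy : ℝ}
    (hΔ : HasPartials (deltaKK a ω) dpx dpy dx dy px py x y) (hy : y ≠ 0) :
    HasPartials (uKK a ω σ) (σ * dpx / y^2) (-6*py/y^2 + σ * dpy / y^2) (-2*a + σ * dx / y^2)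
      (6*py^2/y^3 - 2*σ*deltaKK a ω px py x y/y^3 + σ * dy / y^2) px py x y := by
  have hy2 : y^2 ≠ 0 := pow_ne_zero 2 hy
  refine ⟨?_, ?_, ?_, ?_⟩
  · exact ((hΔ.along_px.const_mul σ).div_const _).const_add _ |>.congr_deriv (by ring)
  · exact ((((hasDerivAt_pow 2 py).const_mul 3).div_const _).const_sub _).add
      ((hΔ.along_py.const_mul σ).div_const _) |>.congr_deriv (by ring)
  · exact (((hasDerivAt_id' x).const_mul (-2*a)).sub_const _).add
      ((hΔ.along_x.const_mul σ).div_const _) |>.congr_deriv (by ring)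
  · exact (((hasDerivAt_const y (3*py^2)).div (hasDerivAt_pow 2 y) hy2).const_sub _).add
      ((hΔ.along_y.const_mul σ).div (hasDerivAt_pow 2 y) hy2) |>.congr_deriv
        (by field_simp; ring)

theorem hasPartials_vKK {σ upx upy ux uy : ℝ}
    (hu : HasPartials (uKK a ω σ) upx upy ux uy px py x y) (ha : a ≠ 0) (hy : y ≠ 0) :
    HasPartials (vKK a ω σ)
      (-1/(4*a) - py/(4*a^2*y) * upx)
      (-(uKK a ω σ px py x y - 4*a*x - 3*ω)/(4*a^2*y) - py/(4*a^2*y) * upy)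
      (-py/(4*a^2*y) * (ux - 4*a))
      (py/(4*a^2*y^2) * (uKK a ω σ px py x y - 4*a*x - 3*ω) - py/(4*a^2*y) * uy)
      px py x y := by
  have hD : 4*a^2*y ≠ 0 := by positivity
  refine ⟨?_, ?_, ?_, ?_⟩
  · exact ((hasDerivAt_id' px).neg.div_const _).sub
      (((hu.along_px.sub_const _).sub_const _).const_mul _) |>.congr_deriv (by ring)
  · exact (hasDerivAt_const _ _).sub
      (((hasDerivAt_id' py).div_const _).mul ((hu.along_py.sub_const _).sub_const _))
      |>.congr_deriv (by ring)
  · exact (hasDerivAt_const _ _).sub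
      (((hu.along_x.sub ((hasDerivAt_id' x).const_mul (4*a))).sub_const _).const_mul _)
      |>.congr_deriv (by ring)
  · exact (hasDerivAt_const _ _).sub
      (((hasDerivAt_const y py).div ((hasDerivAt_id' y).const_mul (4*a^2)) hD).mul
        ((hu.along_y.sub_const _).sub_const _)) |>.congr_deriv
        (by simp only [Pi.div_apply]; field_simp; ring)

theorem u1KK_eq_uKK (hy : y ≠ 0) : u1KK a ω μ px py x y = uKK a ω 1 px py x y := by
  rw [u1KK, uKK, deltaKK, radKK_eq_radPolyKK hy, one_mul]

theorem u2KK_eq_uKK (hy : y ≠ 0) : u2KK a ω μ px py x y = uKK a ω (-1) px py x y := by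
  rw [u2KK, uKK, deltaKK, radKK_eq_radPolyKK hy]
  ring

theorem v1KK_eq_vKK (hy : y ≠ 0) : v1KK a ω μ px py x y = vKK a ω 1 px py x y := by
  rw [v1KK, vKK, u1KK_eq_uKK hy]

theorem v2KK_eq_vKK (hy : y ≠ 0) : v2KK a ω μ px py x y = vKK a ω (-1) px py x y := by
  rw [v2KK, vKK, u2KK_eq_uKK hy]

theorem pbracket_uKK_uKK (σ τ : ℝ) (hy : y ≠ 0) (hR : 0 < radPolyKK a ω px py x y) :
    pbracket (uKK a ω σ) (uKK a ω τ) px py x y = 0 := by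
  have hΔ := hasPartials_deltaKK hR
  rw [pbracket_eq_of_hasPartials (hasPartials_uKK hΔ hy) (hasPartials_uKK hΔ hy)]
  have hΔ0 : deltaKK a ω px py x y ≠ 0 := Real.sqrt_ne_zero'.2 hR
  have hΔsq : deltaKK a ω px py x y ^ 2 = radPolyKK a ω px py x y := Real.sq_sqrt hR.le
  rw [radPolyKK] at hΔsq
  generalize deltaKK a ω px py x y = S at *
  linear_combination (norm := (field_simp; ring1)) (σ - τ) * 12 * py / (y^5 * S) * hΔsq

theorem pbracket_vKK_vKK (σ τ : ℝ) (ha : a ≠ 0) (hy : y ≠ 0) (hR : 0 < radPolyKK a ω px py x y) :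
    pbracket (vKK a ω σ) (vKK a ω τ) px py x y = 0 := by
  have hΔ := hasPartials_deltaKK hR
  rw [pbracket_eq_of_hasPartials (hasPartials_vKK (hasPartials_uKK hΔ hy) ha hy)
    (hasPartials_vKK (hasPartials_uKK hΔ hy) ha hy)]
  have hΔ0 : deltaKK a ω px py x y ≠ 0 := Real.sqrt_ne_zero'.2 hR
  have hΔsq : deltaKK a ω px py x y ^ 2 = radPolyKK a ω px py x y := Real.sq_sqrt hR.le
  rw [radPolyKK] at hΔsq
  simp only [uKK]
  generalize deltaKK a ω px py x y = S at *
  linear_combination (norm := (field_simp; ring1))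
    (σ - τ) * (9*py^3/(8*a^4*y^7) + 3*ω*py/(8*a^4*y^5) + 3*py*x/(4*a^3*y^5)) / S * hΔsq

theorem pbracket_uKK_vKK (σ τ : ℝ) (ha : a ≠ 0) (hy : y ≠ 0) (hR : 0 < radPolyKK a ω px py x y) :
    pbracket (uKK a ω σ) (vKK a ω τ) px py x y = (1 + σ * τ) / 2 := by
  have hΔ := hasPartials_deltaKK hR
  rw [pbracket_eq_of_hasPartials (hasPartials_uKK hΔ hy)
    (hasPartials_vKK (hasPartials_uKK hΔ hy) ha hy)]
  have hΔ0 : deltaKK a ω px py x y ≠ 0 := Real.sqrt_ne_zero'.2 hR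
  have hΔsq : deltaKK a ω px py x y ^ 2 = radPolyKK a ω px py x y := Real.sq_sqrt hR.le
  rw [radPolyKK] at hΔsq
  simp only [uKK]
  generalize deltaKK a ω px py x y = S at *
  linear_combination (norm := (field_simp; ring1))
    ((σ * (-9*py^2 - 3*ω*y^2 - 6*a*x*y^2) + τ * 6*py^2) / (2*a^2*y^6*S)
      + σ * τ / (2*a^2*y^6)) * hΔsq

end KaupKupershmidt

/-- `(v₁,u₁,v₂,u₂)` are canonical separated variables for the
Kaup–Kupershmidt system on the open set where `y ≠ 0` and the radicand is positive. -/
theorem KK_separated_variables_canonical (a ω μ : ℝ) (ha : a ≠ 0)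
    (px py x y : ℝ) (hy : y ≠ 0) (hrad : 0 < radKK a ω μ px py x y) :
    pbracket (u1KK a ω μ) (u2KK a ω μ) px py x y = 0
    ∧ pbracket (v1KK a ω μ) (v2KK a ω μ) px py x y = 0
    ∧ pbracket (u1KK a ω μ) (v1KK a ω μ) px py x y = 1
    ∧ pbracket (u1KK a ω μ) (v2KK a ω μ) px py x y = 0
    ∧ pbracket (u2KK a ω μ) (v1KK a ω μ) px py x y = 0
    ∧ pbracket (u2KK a ω μ) (v2KK a ω μ) px py x y = 1 := by
  have hR : 0 < radPolyKK a ω px py x y := radKK_eq_radPolyKK hy ▸ hrad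
  refine ⟨?_, ?_, ?_, ?_, ?_, ?_⟩
  · rw [pbracket_congr u1KK_eq_uKK u2KK_eq_uKK hy, pbracket_uKK_uKK _ _ hy hR]
  · rw [pbracket_congr v1KK_eq_vKK v2KK_eq_vKK hy, pbracket_vKK_vKK _ _ ha hy hR]
  · rw [pbracket_congr u1KK_eq_uKK v1KK_eq_vKK hy, pbracket_uKK_vKK _ _ ha hy hR]; norm_num
  · rw [pbracket_congr u1KK_eq_uKK v2KK_eq_vKK hy, pbracket_uKK_vKK _ _ ha hy hR]; norm_num
  · rw [pbracket_congr u2KK_eq_uKK v1KK_eq_vKK hy, pbracket_uKK_vKK _ _ ha hy hR]; norm_num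
  · rw [pbracket_congr u2KK_eq_uKK v2KK_eq_vKK hy, pbracket_uKK_vKK _ _ ha hy hR]; norm_num
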